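/- With z_0 = 1, g(0) = f(0), z_j = (y_j/a^j)(f(0)−f(j)) and g(j) = f(j)/(f(0)−f(j)) for j ≥ 1, where (y_k) solves the recurrence y_0=1, y_k(f(0)−f(k)) = ∑_{j=0}^{k−1} y_j f(j) a^{k−j}/(k−j)!, the sequence (z_k) satisfies z_k = ∑_{j=0}^{k−1} z_j g(j)/(k−j)! for all k ≥ 1, and consequently z_k = z_0 g(0)·(1/k! + ∑_{h=1}^{k−1} ∑_{1≤i_1<⋯<i_h<k} (1/(i_1!(i_2−i_1)!⋯(k−i_h)!)) ∏_{t=1}^h g(i_t)). -/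

import Mathlib

open Finset

/-- For a chain `1 ≤ i₁ < ⋯ < i_h < k` encoded as the finset
    `S = {i₁, …, i_h} ⊆ (0, k)`, the product of factorials
    `i₁! (i₂ - i₁)! ⋯ (k - i_h)!` of the successive gaps. -/
def gapFactorials (k : ℕ) (S : Finset ℕ) : ℝ :=
  let L : List ℕ := 0 :: (S.sort (· ≤ ·) ++ [k])
  (List.zipWith (fun p n => ((Nat.factorial (n - p) : ℕ) : ℝ)) L L.tail).prod

/-!
Dividing the recurrence for `y` by `a ^ k` leaves `z j * g j = y j * f j / a ^ j` in the
`j`-th term, so `z` satisfies the renewal recurrence `z k = ∑_{j<k} z j g j / (k - j)!`.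
Splitting each chain `0 < i₁ < ⋯ < i_h < k` at its largest element `i_h` shows that
`c k = chainSum g k` obeys the same recurrence with the `j = 0` term replaced by `1 / k!`,
so strong induction gives `z k = z 0 * g 0 * c k`.
-/

theorem Finset.sort_insert_of_forall_lt {α : Type*} [LinearOrder α] {s : Finset α} {j : α}
    (hs : ∀ i ∈ s, i < j) :
    (insert j s).sort (· ≤ ·) = s.sort (· ≤ ·) ++ [j] := by
  have hj : j ∉ s := fun h => lt_irrefl j (hs j h)
  refine List.Perm.eq_of_pairwise' (r := (· ≤ ·)) (pairwise_sort _ _) ?_ ?_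
  · refine List.pairwise_append.2 ⟨pairwise_sort _ _, List.pairwise_singleton _ _, ?_⟩
    simp only [mem_sort, List.mem_singleton]
    rintro i hi _ rfl
    exact (hs i hi).le
  · rw [← Multiset.coe_eq_coe, ← Multiset.coe_add, sort_eq, sort_eq, insert_val_of_notMem hj,
      add_comm, Multiset.coe_singleton, Multiset.singleton_add]

def gapProd (L : List ℕ) : ℝ :=
  (List.zipWith (fun p n => ((Nat.factorial (n - p) : ℕ) : ℝ)) L L.tail).prod

theorem gapProd_cons_cons (a b : ℕ) (L : List ℕ) :
    gapProd (a :: b :: L) = (b - a).factorial * gapProd (b :: L) := by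
  simp [gapProd]

theorem gapProd_cons_append_pair (a : ℕ) (L : List ℕ) (b c : ℕ) :
    gapProd (a :: (L ++ [b, c])) = gapProd (a :: (L ++ [b])) * (c - b).factorial := by
  induction L generalizing a with
  | nil => simp [gapProd]
  | cons x L ih => simp only [List.cons_append, gapProd_cons_cons, ih, mul_assoc]

theorem gapFactorials_empty (k : ℕ) : gapFactorials k ∅ = k.factorial := by
  simp [gapFactorials]

theorem gapFactorials_insert_of_forall_lt {k j : ℕ} {S : Finset ℕ} (hS : ∀ i ∈ S, i < j) :
    gapFactorials k (insert j S) = gapFactorials j S * (k - j).factorial := by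
  have h := gapProd_cons_append_pair 0 (S.sort (· ≤ ·)) j k
  simp only [gapProd] at h
  simpa [gapFactorials, sort_insert_of_forall_lt hS] using h

theorem Finset.sum_powerset_eq_add_sum_insert_max {α M : Type*} [LinearOrder α]
    [AddCommMonoid M] (s : Finset α) (G : Finset α → M) :
    ∑ t ∈ s.powerset, G t = G ∅ + ∑ j ∈ s, ∑ t ∈ (s.filter (· < j)).powerset, G (insert j t) := by
  induction s using Finset.induction_on_max with
  | empty => simp
  | insert a s ha ih =>
    have has : a ∉ s := fun h => lt_irrefl a (ha a h)
    rw [sum_powerset_insert has, ih, sum_insert has, filter_insert, if_neg (lt_irrefl a),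
      filter_true_of_mem ha, add_assoc, add_comm (∑ t ∈ s.powerset, G (insert a t))]
    congr 2
    refine sum_congr rfl fun j hj => ?_
    rw [filter_insert, if_neg (not_lt.2 (ha j hj).le)]

noncomputable def chainSum (g : ℕ → ℝ) (k : ℕ) : ℝ :=
  ∑ S ∈ (Ioo 0 k).powerset, (1 / gapFactorials k S) * ∏ i ∈ S, g i

theorem chainSum_eq (g : ℕ → ℝ) (k : ℕ) :
    chainSum g k = 1 / k.factorial + ∑ j ∈ Ioo 0 k, chainSum g j * g j / (k - j).factorial := by
  rw [chainSum, sum_powerset_eq_add_sum_insert_max, gapFactorials_empty, prod_empty, mul_one]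
  congr 1
  refine sum_congr rfl fun j hj => ?_
  have hfilter : (Ioo 0 k).filter (· < j) = Ioo 0 j := by
    ext i
    simp only [mem_filter, mem_Ioo] at hj ⊢
    omega
  rw [hfilter, chainSum, sum_mul, sum_div]
  refine sum_congr rfl fun S hS => ?_
  have hS : ∀ i ∈ S, i < j := fun i hi => (mem_Ioo.1 (mem_powerset.1 hS hi)).2
  rw [gapFactorials_insert_of_forall_lt hS, prod_insert fun h => lt_irrefl j (hS j h)]
  field_simp

theorem eq_mul_chainSum_of_eq_sum_range (z g : ℕ → ℝ)
    (hz : ∀ k, 1 ≤ k → z k = ∑ j ∈ range k, z j * g j / (k - j).factorial) :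
    ∀ k, 1 ≤ k → z k = z 0 * g 0 * chainSum g k := by
  intro k
  induction k using Nat.strong_induction_on with
  | _ k ih =>
    intro hk
    have hrange : range k = insert 0 (Ioo 0 k) := by
      ext i
      simp only [mem_range, mem_insert, mem_Ioo]
      omega
    rw [hz k hk, hrange, sum_insert (by simp), chainSum_eq, mul_add, mul_sum, Nat.sub_zero]
    congr 1
    · ring
    · refine sum_congr rfl fun j hj => ?_
      rw [ih j (mem_Ioo.1 hj).2 (mem_Ioo.1 hj).1]
      ring

theorem change_of_variables_formula_general
    (f : ℕ → ℝ) (hf : ∀ k, 1 ≤ k → f k < f 0)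
    (a : ℝ) (ha : 0 < a)
    (y : ℕ → ℝ) (hy0 : y 0 = 1)
    (hy : ∀ k, 1 ≤ k →
      y k * (f 0 - f k) =
        ∑ j ∈ Finset.range k, y j * f j * a ^ (k - j) / (Nat.factorial (k - j)))
    (g : ℕ → ℝ) (hg0 : g 0 = f 0)
    (hg : ∀ j, 1 ≤ j → g j = f j / (f 0 - f j))
    (z : ℕ → ℝ) (hz0 : z 0 = y 0)
    (hz : ∀ j, 1 ≤ j → z j = y j / a ^ j * (f 0 - f j)) :
    (∀ k, 1 ≤ k →
      z k = ∑ j ∈ Finset.range k, z j * g j / (Nat.factorial (k - j))) ∧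
    (∀ k, 1 ≤ k →
      z k = z 0 * g 0 *
        ∑ S ∈ (Finset.Ioo 0 k).powerset,
          (1 / gapFactorials k S) * ∏ i ∈ S, g i) := by
  have hzg : ∀ j, z j * g j = y j * f j / a ^ j := by
    intro j
    rcases Nat.eq_zero_or_pos j with rfl | hj
    · simp [hz0, hy0, hg0]
    · have hf0j : f 0 - f j ≠ 0 := (sub_pos.2 (hf j hj)).ne'
      rw [hz j hj, hg j hj]
      field_simp
  have hrec : ∀ k, 1 ≤ k → z k = ∑ j ∈ range k, z j * g j / (k - j).factorial := by
    intro k hk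
    rw [hz k hk, div_mul_eq_mul_div, hy k hk, sum_div]
    refine sum_congr rfl fun j hj => ?_
    rw [hzg, ← pow_mul_pow_sub a (mem_range.1 hj).le]
    field_simp
  exact ⟨hrec, eq_mul_chainSum_of_eq_sum_range z g hrec⟩

theorem change_of_variables_formula
    (f : ℕ → ℝ) (hf0 : ∀ k, 0 ≤ f k) (hf : ∀ k, 1 ≤ k → f k < f 0)
    (a : ℝ) (ha : 0 < a)
    (y : ℕ → ℝ) (hy0 : y 0 = 1)
    (hy : ∀ k, 1 ≤ k →
      y k * (f 0 - f k) =
        ∑ j ∈ Finset.range k, y j * f j * a ^ (k - j) / (Nat.factorial (k - j)))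
    (g : ℕ → ℝ) (hg0 : g 0 = f 0)
    (hg : ∀ j, 1 ≤ j → g j = f j / (f 0 - f j))
    (z : ℕ → ℝ) (hz0 : z 0 = y 0)
    (hz : ∀ j, 1 ≤ j → z j = y j / a ^ j * (f 0 - f j)) :
    (∀ k, 1 ≤ k →
      z k = ∑ j ∈ Finset.range k, z j * g j / (Nat.factorial (k - j))) ∧
    (∀ k, 1 ≤ k →
      z k = z 0 * g 0 *
        ∑ S ∈ (Finset.Ioo 0 k).powerset,
          (1 / gapFactorials k S) * ∏ i ∈ S, g i) :=
  change_of_variables_formula_general f hf a ha y hy0 hy g hg0 hg z hz0 hz
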